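/- For every integer k ≥ 2, Φ(STAB(H_k)) = conv({(0,0), (1/2, 0), (1/k, (k−1)/k), (0,1)}). -/

import Mathlib

open Finset

noncomputable section

/-- `cone(P)`: the homogenization of `P`, indexed by `Option V` with `none` playing
the role of the `0` coordinate. -/
def lsCone {V : Type*} (P : Set (V → ℝ)) : Set (Option V → ℝ) :=
  {y | ∃ (lam : ℝ) (x : V → ℝ), 0 ≤ lam ∧ x ∈ P ∧
    y = fun o => o.elim lam (fun v => lam * x v)}

/-- The lift `LŜ₊(P)`: symmetric PSD matrices `Y` indexed by `Option V`
with `Y e₀ = diag Y` and all columns conditions. -/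
def lsLift {V : Type*} [Fintype V] [DecidableEq V] (P : Set (V → ℝ)) :
    Set (Matrix (Option V) (Option V) ℝ) :=
  {Y | Y.PosSemidef ∧ Y.mulVec (Pi.single none 1) = Matrix.diag Y ∧
      ∀ v : V, Y.mulVec (Pi.single (some v) 1) ∈ lsCone P ∧
        Y.mulVec (Pi.single none 1 - Pi.single (some v) 1) ∈ lsCone P}

/-- The Lovász–Schrijver operator `LS₊`. -/
def lsPlus {V : Type*} [Fintype V] [DecidableEq V] (P : Set (V → ℝ)) : Set (V → ℝ) :=
  {x | ∃ Y ∈ lsLift P, Y.mulVec (Pi.single none 1) = fun o => o.elim 1 x}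

/-- The fractional stable set polytope. -/
def FRAC {V : Type*} (G : SimpleGraph V) : Set (V → ℝ) :=
  {x | (∀ v, 0 ≤ x v ∧ x v ≤ 1) ∧ ∀ u v, G.Adj u v → x u + x v ≤ 1}

/-- The stable set polytope: convex hull of incidence vectors of stable sets. -/
def STAB {V : Type*} (G : SimpleGraph V) : Set (V → ℝ) :=
  convexHull ℝ {x | ∃ S : Set V, (∀ u ∈ S, ∀ v ∈ S, ¬ G.Adj u v) ∧
    x = S.indicator fun _ => (1 : ℝ)}

/-- The graph `H_k`, on vertex set `Fin k × Fin 3` (vertex `i_p` is `(i, p)`). -/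
def Hgraph (k : ℕ) : SimpleGraph (Fin k × Fin 3) :=
  SimpleGraph.fromRel (fun a b =>
    (a.1 = b.1 ∧ ((a.2 = 0 ∧ b.2 = 1) ∨ (a.2 = 1 ∧ b.2 = 2))) ∨
    (a.1 ≠ b.1 ∧ a.2 = 0 ∧ b.2 = 2))

/-- The vector `w_k(a,b)`: entry `a` on `[k]₀ ∪ [k]₂` and `b` on `[k]₁`. -/
def wVec (k : ℕ) (a b : ℝ) : Fin k × Fin 3 → ℝ := fun v => if v.2 = 1 then b else a

/-! `(a, b) ↦ w_k(a, b)` is linear, so `Φ(STAB(H_k))` is convex. It contains the four corners: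
they are `w_k` of the empty stable set, of the stable layer `[k]₁`, of the average of the stable
layers `[k]₀` and `[k]₂`, and of the average over `i` of the stable sets
`{i₀, i₂} ∪ {j₁ : j ≠ i}`.

Conversely `w_k(a, b) ∈ STAB(H_k)` gives `a, b ≥ 0` and `a + b ≤ 1` (an edge `i₀ i₁`), and
`2(k-1)a + (k-2)b ≤ k-1`: the weights `k-1` on `[k]₀ ∪ [k]₂` and `k-2` on `[k]₁` sum to at most
`k(k-1)` over a stable set `S`. Indeed `S` meets at most `k` of the sets `{i₀, i₁}`, and at most
`k` of the `{i₁, i₂}`; if it meets both `[k]₀` and `[k]₂`, the edges `i₀ j₂` (`i ≠ j`) force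
`S ∩ ([k]₀ ∪ [k]₂) = {i₀, i₂}` for a single `i`, and then `i₁ ∉ S`. These four inequalities cut
out the quadrilateral.
-/

section StableSetPolytope

variable {V : Type*} {G : SimpleGraph V}

lemma convex_STAB : Convex ℝ (STAB G) :=
  convex_convexHull ℝ _

lemma indicator_mem_STAB {S : Set V} (hS : ∀ u ∈ S, ∀ v ∈ S, ¬ G.Adj u v) :
    S.indicator (fun _ => (1 : ℝ)) ∈ STAB G :=
  subset_convexHull ℝ _ ⟨S, hS, rfl⟩

lemma le_of_mem_STAB {f : (V → ℝ) → ℝ} (hf : IsLinearMap ℝ f) {r : ℝ}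
    (h : ∀ S : Set V, (∀ u ∈ S, ∀ v ∈ S, ¬ G.Adj u v) → f (S.indicator fun _ => 1) ≤ r)
    {x : V → ℝ} (hx : x ∈ STAB G) : f x ≤ r :=
  convexHull_min (by rintro _ ⟨S, hS, rfl⟩; exact h S hS) (convex_halfSpace_le hf r) hx

lemma STAB_subset_FRAC : STAB G ⊆ FRAC G := by
  classical
  intro x hx
  refine ⟨fun v => ⟨?_, ?_⟩, fun u v huv => ?_⟩
  · refine neg_nonpos.1 (le_of_mem_STAB (-LinearMap.proj v).isLinear (fun S _ => ?_) hx)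
    by_cases hv : v ∈ S <;> simp [hv]
  · refine le_of_mem_STAB (LinearMap.proj v).isLinear (fun S _ => ?_) hx
    by_cases hv : v ∈ S <;> simp [hv]
  · refine le_of_mem_STAB (LinearMap.proj (R := ℝ) (φ := fun _ => ℝ) u + LinearMap.proj v).isLinear
      (fun S hS => ?_) hx
    have : ¬ (u ∈ S ∧ v ∈ S) := fun h => hS u h.1 v h.2 huv
    by_cases hu : u ∈ S <;> by_cases hv : v ∈ S <;> simp_all

end StableSetPolytope

lemma smul_add_smul_mem_convexHull {E : Type*} [AddCommGroup E] [Module ℝ E] {s : Set E}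
    {p q : E} {a b : ℝ} (h0 : 0 ∈ s) (hp : p ∈ s) (hq : q ∈ s) (ha : 0 ≤ a) (hb : 0 ≤ b)
    (hab : a + b ≤ 1) : a • p + b • q ∈ convexHull ℝ s := by
  have := (convex_convexHull ℝ s).sum_mem (t := univ) (w := ![1 - a - b, a, b])
    (z := ![0, p, q]) (by simpa [Fin.forall_fin_succ, ha, hb, sub_sub] using hab) (by simp [Fin.sum_univ_three, sub_sub, add_assoc])
    (by simp [Fin.forall_fin_succ, subset_convexHull ℝ s h0, subset_convexHull ℝ s hp,
      subset_convexHull ℝ s hq])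
  simpa [Fin.sum_univ_three] using this

lemma mem_convexHull_quadrilateral {κ a b : ℝ} (hκ : 1 < κ) (ha : 0 ≤ a) (hb : 0 ≤ b)
    (hab : a + b ≤ 1) (h : 2 * (κ - 1) * a + (κ - 2) * b ≤ κ - 1) :
    (a, b) ∈ convexHull ℝ {((0 : ℝ), (0 : ℝ)), (1 / 2, 0), (1 / κ, (κ - 1) / κ), (0, 1)} := by
  set P : Set (ℝ × ℝ) := {(0, 0), (1 / 2, 0), (1 / κ, (κ - 1) / κ), (0, 1)}
  have hκ0 : κ ≠ 0 := by positivity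
  have hκ1 : 0 < κ - 1 := by linarith
  rcases le_total b ((κ - 1) * a) with hba | hab'
  · have hsum : 2 * a - 2 * b / (κ - 1) + κ * b / (κ - 1) ≤ 1 := calc
      _ = (2 * (κ - 1) * a + (κ - 2) * b) / (κ - 1) := by field_simp; ring
      _ ≤ 1 := (div_le_one hκ1).2 h
    have hmem := smul_add_smul_mem_convexHull (s := P) (p := (1 / 2, 0))
      (q := (1 / κ, (κ - 1) / κ)) (Set.mem_insert _ _) (by simp [P]) (by simp [P])
      (sub_nonneg.2 ((div_le_iff₀ hκ1).2 (by linarith))) (by positivity) hsum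
    convert hmem using 1
    simp only [Prod.smul_mk, Prod.mk_add_mk, smul_eq_mul, Prod.mk.injEq]
    constructor <;> field_simp <;> ring
  · have hmem := smul_add_smul_mem_convexHull (s := P) (p := (1 / κ, (κ - 1) / κ))
      (q := (0, 1)) (a := κ * a) (b := b - (κ - 1) * a) (Set.mem_insert _ _) (by simp [P])
      (by simp [P]) (by positivity) (by linarith) (by linarith)
    convert hmem using 1
    simp only [Prod.smul_mk, Prod.mk_add_mk, smul_eq_mul, Prod.mk.injEq]
    constructor <;> field_simp <;> ring

lemma weighted_card_le_of_disjoint {ι : Type*} [Fintype ι] {A B C : Finset ι}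
    (hι : 2 ≤ Fintype.card ι) (hAB : Disjoint A B) (hBC : Disjoint B C)
    (hAC : ∀ i ∈ A, ∀ j ∈ C, i = j) :
    ((Fintype.card ι : ℝ) - 1) * (#A + #C) + ((Fintype.card ι : ℝ) - 2) * #B ≤
      Fintype.card ι * (Fintype.card ι - 1) := by
  set n := Fintype.card ι
  have hn : (2 : ℝ) ≤ n := by exact_mod_cast hι
  have hA : (#A : ℝ) + #B ≤ n := by
    exact_mod_cast (card_disjUnion A B hAB).symm.trans_le (card_le_univ _)
  have hC : (#B : ℝ) + #C ≤ n := by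
    exact_mod_cast (card_disjUnion B C hBC).symm.trans_le (card_le_univ _)
  rcases A.eq_empty_or_nonempty with rfl | ⟨a, ha⟩
  · simp only [card_empty, Nat.cast_zero, zero_add] at hA ⊢
    nlinarith
  rcases C.eq_empty_or_nonempty with rfl | ⟨c, hc⟩
  · simp only [card_empty, Nat.cast_zero, add_zero] at hC ⊢
    nlinarith
  have hA1 : #A = 1 := card_eq_one.2 ⟨c, eq_singleton_iff_unique_mem.2
    ⟨hAC a ha c hc ▸ ha, fun i hi => hAC i hi c hc⟩⟩
  have hC1 : #C = 1 := card_eq_one.2 ⟨a, eq_singleton_iff_unique_mem.2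
    ⟨(hAC a ha c hc).symm ▸ hc, fun j hj => (hAC a ha j hj).symm⟩⟩
  simp only [hA1, hC1, Nat.cast_one] at hC ⊢
  nlinarith

section Hgraph

variable {k : ℕ}

lemma Hgraph_adj_zero_one (i : Fin k) : (Hgraph k).Adj (i, 0) (i, 1) := by
  simp [Hgraph]

lemma Hgraph_adj_one_two (i : Fin k) : (Hgraph k).Adj (i, 1) (i, 2) := by
  simp [Hgraph]

lemma Hgraph_adj_zero_two {i j : Fin k} (hij : i ≠ j) : (Hgraph k).Adj (i, 0) (j, 2) := by
  simp [Hgraph, hij]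

lemma Hgraph_adj_snd_ne {u v : Fin k × Fin 3} (h : (Hgraph k).Adj u v) : u.2 ≠ v.2 := by
  rw [Hgraph, SimpleGraph.fromRel_adj] at h
  grind

lemma indicator_layer_mem_STAB (p : Fin 3) :
    {v : Fin k × Fin 3 | v.2 = p}.indicator (fun _ => (1 : ℝ)) ∈ STAB (Hgraph k) :=
  indicator_mem_STAB fun _ hu _ hv h => Hgraph_adj_snd_ne h (hu.trans hv.symm)

lemma indicator_transversal_mem_STAB (i : Fin k) :
    {v : Fin k × Fin 3 | if v.2 = 1 then v.1 ≠ i else v.1 = i}.indicator (fun _ => (1 : ℝ)) ∈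
      STAB (Hgraph k) := by
  refine indicator_mem_STAB fun u hu v hv h => ?_
  rw [Hgraph, SimpleGraph.fromRel_adj] at h
  grind

lemma isLinearMap_wVec (k : ℕ) : IsLinearMap ℝ fun q : ℝ × ℝ => wVec k q.1 q.2 := by
  constructor <;> intros <;> ext v <;> by_cases hv : v.2 = 1 <;> simp [wVec, hv]

lemma wVec_zero_zero_mem_STAB : wVec k 0 0 ∈ STAB (Hgraph k) := by
  convert indicator_mem_STAB (G := Hgraph k) (S := ∅) (by simp) using 1
  ext v
  simp [wVec]

lemma wVec_zero_one_mem_STAB : wVec k 0 1 ∈ STAB (Hgraph k) := by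
  convert indicator_layer_mem_STAB (k := k) 1 using 1
  ext v
  by_cases hv : v.2 = 1 <;> simp [wVec, hv]

lemma wVec_half_zero_mem_STAB : wVec k (1 / 2) 0 ∈ STAB (Hgraph k) := by
  convert convex_STAB (indicator_layer_mem_STAB 0) (indicator_layer_mem_STAB 2)
    (by norm_num : (0 : ℝ) ≤ 1 / 2) (by norm_num : (0 : ℝ) ≤ 1 / 2) (by norm_num) using 1
  ext ⟨i, p⟩
  fin_cases p <;> simp [wVec]

lemma wVec_inv_mem_STAB (hk : k ≠ 0) :
    wVec k (1 / k) ((k - 1) / k) ∈ STAB (Hgraph k) := by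
  have hk' : (k : ℝ) ≠ 0 := by exact_mod_cast hk
  convert convex_STAB.sum_mem (t := univ) (w := fun _ => 1 / (k : ℝ))
    (fun _ _ => by positivity) (by simp [hk'])
    (fun i _ => indicator_transversal_mem_STAB (k := k) i) using 1
  ext ⟨j, p⟩
  have hcard : (#{i : Fin k | ¬ j = i} : ℝ) = k - 1 := by
    rw [filter_not, filter_eq, if_pos (mem_univ _), card_univ_sdiff, card_singleton,
      Fintype.card_fin, Nat.cast_sub (Nat.one_le_iff_ne_zero.2 hk), Nat.cast_one]
  fin_cases p <;> simp [wVec, Set.indicator_apply, sum_ite, hcard, div_eq_mul_inv]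

def weightedSum (k : ℕ) (x : Fin k × Fin 3 → ℝ) : ℝ :=
  ∑ i, (((k : ℝ) - 1) * (x (i, 0) + x (i, 2)) + ((k : ℝ) - 2) * x (i, 1))

lemma isLinearMap_weightedSum (k : ℕ) : IsLinearMap ℝ (weightedSum k) := by
  constructor
  · intro x y
    simp only [weightedSum, Pi.add_apply, ← sum_add_distrib]
    exact sum_congr rfl fun _ _ => by ring
  · intro c x
    simp only [weightedSum, Pi.smul_apply, smul_eq_mul, mul_sum]
    exact sum_congr rfl fun _ _ => by ring

open Classical in
lemma weightedSum_indicator (S : Set (Fin k × Fin 3)) :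
    weightedSum k (S.indicator fun _ => 1) =
      ((k : ℝ) - 1) * (#{i | (i, 0) ∈ S} + #{i | (i, 2) ∈ S}) +
        ((k : ℝ) - 2) * #{i | (i, 1) ∈ S} := by
  have hcard (p : Fin 3) :
      ∑ i, S.indicator (fun _ => (1 : ℝ)) (i, p) = #{i | (i, p) ∈ S} := by
    simp [Set.indicator_apply]
  simp only [weightedSum, sum_add_distrib, ← mul_sum, hcard]

lemma weightedSum_indicator_le (hk : 2 ≤ k) {S : Set (Fin k × Fin 3)}
    (hS : ∀ u ∈ S, ∀ v ∈ S, ¬ (Hgraph k).Adj u v) :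
    weightedSum k (S.indicator fun _ => 1) ≤ k * (k - 1) := by
  classical
  rw [weightedSum_indicator]
  simpa using weighted_card_le_of_disjoint (by simpa using hk)
    (disjoint_filter.2 fun i _ h0 h1 => hS _ h0 _ h1 (Hgraph_adj_zero_one i))
    (disjoint_filter.2 fun i _ h1 h2 => hS _ h1 _ h2 (Hgraph_adj_one_two i))
    (fun i hi j hj => by_contra fun hij =>
      hS _ (mem_filter.1 hi).2 _ (mem_filter.1 hj).2 (Hgraph_adj_zero_two hij))

lemma weightedSum_wVec (a b : ℝ) :
    weightedSum k (wVec k a b) = k * (2 * (k - 1) * a + (k - 2) * b) := by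
  simp only [weightedSum, wVec, Fin.isValue, zero_ne_one, ↓reduceIte, Fin.reduceEq, sum_const,
    card_univ, Fintype.card_fin, nsmul_eq_mul]
  ring

lemma wVec_mem_STAB_facet (hk : 2 ≤ k) {a b : ℝ} (h : wVec k a b ∈ STAB (Hgraph k)) :
    2 * ((k : ℝ) - 1) * a + ((k : ℝ) - 2) * b ≤ k - 1 := by
  have hk0 : (0 : ℝ) < k := by positivity
  have := le_of_mem_STAB (isLinearMap_weightedSum k) (fun S hS => weightedSum_indicator_le hk hS) h
  rw [weightedSum_wVec] at this
  exact le_of_mul_le_mul_left this hk0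

lemma wVec_mem_STAB_bounds (hk : k ≠ 0) {a b : ℝ} (h : wVec k a b ∈ STAB (Hgraph k)) :
    0 ≤ a ∧ 0 ≤ b ∧ a + b ≤ 1 := by
  obtain ⟨hbox, hedge⟩ := STAB_subset_FRAC h
  let i : Fin k := ⟨0, Nat.pos_of_ne_zero hk⟩
  simpa [wVec] using ⟨(hbox (i, 0)).1, (hbox (i, 1)).1, hedge _ _ (Hgraph_adj_zero_one i)⟩

end Hgraph

theorem Hk_Phi_STAB (k : ℕ) (hk : 2 ≤ k) :
    {q : ℝ × ℝ | wVec k q.1 q.2 ∈ STAB (Hgraph k)} =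
      convexHull ℝ {((0 : ℝ), (0 : ℝ)), (1 / 2, 0), (1 / (k : ℝ), ((k : ℝ) - 1) / (k : ℝ)),
        (0, 1)} := by
  have hk0 : k ≠ 0 := by omega
  apply Set.Subset.antisymm
  · rintro ⟨a, b⟩ h
    obtain ⟨ha, hb, hab⟩ := wVec_mem_STAB_bounds hk0 h
    exact mem_convexHull_quadrilateral (by exact_mod_cast hk) ha hb hab
      (wVec_mem_STAB_facet hk h)
  · refine convexHull_min ?_ (convex_STAB.is_linear_preimage (isLinearMap_wVec k))
    rintro q (rfl | rfl | rfl | rfl)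
    exacts [wVec_zero_zero_mem_STAB, wVec_half_zero_mem_STAB, wVec_inv_mem_STAB hk0,
      wVec_zero_one_mem_STAB]
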